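/- In protocol B, decrypting a ciphertext (|i⟩ + (−1)^b |i⊕k⟩)/√2 using any key k' ≠ k (via the CNOT-based decryption procedure) yields outcome 0 or 1 each with probability exactly 1/2. -/
import Mathlib


/-- Protocol-B cipher state `(|i⟩ + (−1)^b |i⊕k⟩)/√2` as a vector in `ℂ^{2^l}`. -/
noncomputable def cipherB {l : ℕ} (b : ZMod 2) (k i : Fin l → ZMod 2) :
    (Fin l → ZMod 2) → ℂ := fun u =>
  ((if u = i then 1 else 0) + (-1 : ℂ) ^ b.val * (if u = i + k then 1 else 0))
    / (Real.sqrt 2 : ℂ)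

/-- The (self-inverse) basis permutation implemented by the CNOT layer of
protocol-B decryption with candidate key `k'` and control qubit `j`: it maps the
basis state `|u⟩` to `|u'⟩` with `u'_j = u_j` and `u'_s = u_s ⊕ u_j k'_s` for
`s ≠ j`. -/
def cnotLayer {l : ℕ} (k' : Fin l → ZMod 2) (j : Fin l)
    (u : Fin l → ZMod 2) : Fin l → ZMod 2 := fun s =>
  if s = j then u j else u s + u j * k' s

lemma cipher_support {l : ℕ} (b : ZMod 2) (k i : Fin l → ZMod 2)
    (v : Fin l → ZMod 2) (hv : cipherB b k i v ≠ 0) : v = i ∨ v = i + k := by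
  by_contra h
  push_neg at h
  exact hv (by simp [cipherB, h.1, h.2])

lemma sum_normSq_cipher {l : ℕ} (b : ZMod 2) (k i : Fin l → ZMod 2) (hk : k ≠ 0) :
    ∑ v : Fin l → ZMod 2, Complex.normSq (cipherB b k i v) = 1 := by
  classical
  have hik : i ≠ i + k := by
    intro h
    exact hk (left_eq_add.mp h)
  rw [← Finset.sum_subset (Finset.subset_univ ({i, i + k} : Finset (Fin l → ZMod 2)))]
  · rw [Finset.sum_pair hik]
    have e1 : cipherB b k i i = 1 / (Real.sqrt 2 : ℂ) := by
      simp [cipherB, hik]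
    have e2 : cipherB b k i (i + k) = (-1 : ℂ) ^ b.val / (Real.sqrt 2 : ℂ) := by
      simp [cipherB, hik.symm]
    rw [e1, e2]
    have hn : Complex.normSq ((Real.sqrt 2 : ℝ) : ℂ) = 2 := by
      rw [Complex.normSq_ofReal]
      exact Real.mul_self_sqrt (by norm_num)
    rw [Complex.normSq_div, Complex.normSq_div, hn]
    have : Complex.normSq ((-1 : ℂ) ^ b.val) = 1 := by
      rw [map_pow]; simp
    rw [this]
    norm_num
  · intro v _ hv
    have h1 : v ≠ i := by rintro rfl; simp at hv
    have h2 : v ≠ i + k := by rintro rfl; simp at hv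
    simp [cipherB, h1, h2]

lemma cnot_invol {l : ℕ} (k' : Fin l → ZMod 2) (j : Fin l) (v : Fin l → ZMod 2) :
    cnotLayer k' j (cnotLayer k' j v) = v := by
  funext s
  by_cases hs : s = j <;> simp [cnotLayer, hs]
  have h2 : ∀ a : ZMod 2, a + a = 0 := by decide
  rw [add_assoc, ← add_mul]
  simp [h2]

lemma orthog {l : ℕ} (b : ZMod 2) (k k' i : Fin l → ZMod 2)
    (hne : k' ≠ k) (j : Fin l) (hj : k' j = 1) (u : Fin l → ZMod 2) (hu : u j = 0) :
    cipherB b k i u = 0 ∨ cipherB b k i (cnotLayer k' j (Function.update u j 1)) = 0 := by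
  by_contra h
  push_neg at h
  set w := cnotLayer k' j (Function.update u j 1) with hw
  have hwj : w j = 1 := by simp [hw, cnotLayer]
  have hws : ∀ s, s ≠ j → w s = u s + k' s := by
    intro s hs
    simp [hw, cnotLayer, hs, Function.update_of_ne hs]
  have h1 := cipher_support b k i u h.1
  have h2 := cipher_support b k i w h.2
  apply hne
  funext s
  rcases h1 with rfl | h1 <;> rcases h2 with h2 | h2
  · exact absurd (h2 ▸ hwj) (by rw [hu]; decide)
  · by_cases hs : s = j
    · subst hs
      have hks : k s = 1 := by
        have h4 := congrFun h2 s
        rw [hwj, Pi.add_apply, hu] at h4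
        simpa using h4.symm
      rw [hj, hks]
    · have := congrFun h2 s
      rw [hws s hs, Pi.add_apply] at this
      exact add_left_cancel this
  · by_cases hs : s = j
    · subst hs
      have hik : i s + k s = 0 := by rw [← Pi.add_apply]; exact h1 ▸ hu
      have hij : i s = 1 := by rw [← h2]; exact hwj
      rw [hij] at hik
      rw [hj]
      revert hik; generalize k s = a; revert a; decide
    · have := congrFun h2 s
      rw [hws s hs, h1, Pi.add_apply] at this
      have : k s + k' s = 0 := by
        have h3 : i s + (k s + k' s) = i s + 0 := by rw [add_zero, ← add_assoc]; exact this
        exact add_left_cancel h3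
      revert this; generalize k s = a; generalize k' s = c; revert a c; decide
  · have := h2 ▸ hwj
    rw [← h1, hu] at this
    exact absurd this (by decide)

/-- decrypting the protocol-B ciphertext
`(|i⟩ + (−1)^b |i⊕k⟩)/√2` with any key `k' ≠ k` (pick `j` with `k'_j = 1`, apply
the CNOT layer, measure qubit `j` in the `|±⟩` basis) gives outcome 0 (`|+⟩`) with
probability exactly 1/2 (and hence outcome 1 with probability 1/2 as well). -/
theorem stmt17 (l : ℕ) (b : ZMod 2) (k k' i : Fin l → ZMod 2)
    (hk : k ≠ 0) (hne : k' ≠ k) (j : Fin l) (hj : k' j = 1) :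
    ∑ u ∈ Finset.univ.filter (fun u : Fin l → ZMod 2 => u j = 0),
        Complex.normSq
          ((cipherB b k i (cnotLayer k' j u)
              + cipherB b k i (cnotLayer k' j (Function.update u j 1)))
            / (Real.sqrt 2 : ℂ))
      = 1 / 2 := by
  classical
  set c := cipherB b k i with hc
  have hn2 : Complex.normSq ((Real.sqrt 2 : ℝ) : ℂ) = 2 := by
    rw [Complex.normSq_ofReal]
    exact Real.mul_self_sqrt (by norm_num)
  -- for u in the filter, cnotLayer k' j u = u
  have hfix : ∀ u : Fin l → ZMod 2, u j = 0 → cnotLayer k' j u = u := by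
    intro u hu
    funext s
    by_cases hs : s = j <;> simp [cnotLayer, hs, hu]
  have key : ∀ u ∈ Finset.univ.filter (fun u : Fin l → ZMod 2 => u j = 0),
      Complex.normSq
          ((c (cnotLayer k' j u)
              + c (cnotLayer k' j (Function.update u j 1)))
            / (Real.sqrt 2 : ℂ))
      = (Complex.normSq (c u)
          + Complex.normSq (c (cnotLayer k' j (Function.update u j 1)))) / 2 := by
    intro u hu
    rw [Finset.mem_filter] at hu
    rw [hfix u hu.2]
    rw [Complex.normSq_div, hn2]
    congr 1
    rcases orthog b k k' i hne j hj u hu.2 with h0 | h0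
    · rw [show c u = 0 from h0]; simp
    · rw [show c (cnotLayer k' j (Function.update u j 1)) = 0 from h0]; simp
  rw [Finset.sum_congr rfl key]
  rw [← Finset.sum_div, Finset.sum_add_distrib]
  -- second sum: bijection onto the u j = 1 part
  have hbij : ∑ u ∈ Finset.univ.filter (fun u : Fin l → ZMod 2 => u j = 0),
      Complex.normSq (c (cnotLayer k' j (Function.update u j 1)))
      = ∑ v ∈ Finset.univ.filter (fun v : Fin l → ZMod 2 => ¬ v j = 0),
      Complex.normSq (c v) := by
    refine Finset.sum_nbij' (fun u => cnotLayer k' j (Function.update u j 1))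
      (fun v => Function.update (cnotLayer k' j v) j 0) ?_ ?_ ?_ ?_ ?_
    · intro u hu
      rw [Finset.mem_filter] at *
      refine ⟨Finset.mem_univ _, ?_⟩
      simp [cnotLayer]
    · intro v hv
      rw [Finset.mem_filter] at *
      exact ⟨Finset.mem_univ _, by simp⟩
    · intro u hu
      rw [Finset.mem_filter] at hu
      rw [cnot_invol, Function.update_idem, ← hu.2, Function.update_eq_self]
    · intro v hv
      rw [Finset.mem_filter] at hv
      have hvj : v j ≠ 0 := hv.2
      have hv1 : v j = 1 := by revert hvj; generalize v j = a; revert a; decide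
      have hcj : cnotLayer k' j v j = v j := by simp [cnotLayer]
      rw [Function.update_idem, ← hv1, ← hcj, Function.update_eq_self, cnot_invol]
    · intro u _; rfl
  rw [hbij, Finset.sum_filter_add_sum_filter_not]
  rw [hc, sum_normSq_cipher b k i hk]
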